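/- For a basic exponential sum μ on ℂⁿ there exist c₁, c₂ > 0 such that |μ(p)|_p + |dμ(p)|_p ≥ c₂ for all p outside the c₁-neighborhood U_{c₁}(Γ^{(n−1)}) of the (n−1)-skeleton. In other words, away from the (n−1)-skeleton, μ has no near-critical near-zeros: the C¹-norm |μ(p)|_{C¹_p} := |μ(p)|_p + |dμ(p)|_p is bounded below. -/

import Mathlib

open MeasureTheory

noncomputable section

/-- `ℂⁿ` with its Euclidean (Hermitian) norm. -/
abbrev ESp (n : ℕ) := EuclideanSpace ℂ (Fin n)

/-- The bilinear pairing `m · z = Σ m_k z_k`. -/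
def edot {n : ℕ} (m z : ESp n) : ℂ := ∑ k, m k * z k

variable {n l : ℕ}

/-- The exponential sum `μ(z) = Σ_j e^{α_j + m_j · z}`. -/
def expSum (m : Fin (l+1) → ESp n) (α : Fin (l+1) → ℂ) (z : ESp n) : ℂ :=
  ∑ j, Complex.exp (α j + edot (m j) z)

/-- `b(z) = max_j Re(α_j + m_j · z)`. -/
def bfun (m : Fin (l+1) → ESp n) (α : Fin (l+1) → ℂ) (z : ESp n) : ℝ :=
  Finset.univ.sup' Finset.univ_nonempty fun j => (α j + edot (m j) z).re

/-- The set `I_z` of indices attaining the maximum `b(z)`. -/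
def Iset (m : Fin (l+1) → ESp n) (α : Fin (l+1) → ℂ) (z : ESp n) : Set (Fin (l+1)) :=
  {i | (α i + edot (m i) z).re = bfun m α z}

/-- The set `I_{z,c}` of indices within `c` of the maximum `b(z)`. -/
def IsetC (m : Fin (l+1) → ESp n) (α : Fin (l+1) → ℂ) (z : ESp n) (c : ℝ) :
    Set (Fin (l+1)) :=
  {i | bfun m α z - c < (α i + edot (m i) z).re}

/-- The `k`-skeleton `Γ^{(k)}`: points where the real affine span of the maximizing
exponents has dimension `≥ 2n − k`. -/
def skel (m : Fin (l+1) → ESp n) (α : Fin (l+1) → ℂ) (k : ℕ) : Set (ESp n) :=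
  {z | 2*n - k ≤ Module.finrank ℝ (affineSpan ℝ (m '' Iset m α z)).direction}

/-- The relaxed neighborhood `U_c(Γ^{(k)})`, defined via near-maximizing exponents. -/
def Uskel (m : Fin (l+1) → ESp n) (α : Fin (l+1) → ℂ) (c : ℝ) (k : ℕ) : Set (ESp n) :=
  {z | 2*n - k ≤ Module.finrank ℝ (affineSpan ℝ (m '' IsetC m α z c)).direction}

/-- `{m_i}_{i∈s}` is the vertex set of a totally real non-degenerate simplex: for any base
vertex, the edge vectors together with their `J`-images are `ℝ`-linearly independent. -/
def TotallyRealSet (m : Fin (l+1) → ESp n) (s : Set (Fin (l+1))) : Prop :=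
  ∀ i₀ ∈ s, LinearIndependent ℝ
    fun q : {i : Fin (l+1) // i ∈ s ∧ i ≠ i₀} × Bool =>
      if q.2 then Complex.I • (m q.1.1 - m i₀) else m q.1.1 - m i₀

/-- `μ` is a basic exponential sum. -/
def IsBasic (m : Fin (l+1) → ESp n) (α : Fin (l+1) → ℂ) : Prop :=
  ∀ c₁ > (0:ℝ), ∃ c₂ > (0:ℝ), ∀ k : ℕ, n ≤ k → k ≤ 2*n →
    ∀ z ∈ skel m α k \ Uskel m α c₂ (k-1),
      IsetC m α z c₁ = Iset m α z ∧ TotallyRealSet m (Iset m α z) ∧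
        (Iset m α z).ncard = 2*n + 1 - k

/-- `μ` is strictly basic: basic, and the vertex sets of the simplices with at most `n`
vertices arising from maximizing exponents are `ℂ`-linearly independent. -/
def IsStrictlyBasic (m : Fin (l+1) → ESp n) (α : Fin (l+1) → ℂ) : Prop :=
  IsBasic m α ∧ ∀ z : ESp n, (Iset m α z).ncard ≤ n →
    LinearIndependent ℂ fun i : Iset m α z => m i

/-- The complex gradient of the exponential sum: `(dμ)_k = Σ_j e^{α_j + m_j·z} m_{j,k}`. -/
def gradExpSum (m : Fin (l+1) → ESp n) (α : Fin (l+1) → ℂ) (z : ESp n) : ESp n :=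
  WithLp.toLp 2 fun k => ∑ j, Complex.exp (α j + edot (m j) z) * m j k

/-- The critical set of the exponential sum. -/
def critSet (m : Fin (l+1) → ESp n) (α : Fin (l+1) → ℂ) : Set (ESp n) :=
  {z | gradExpSum m α z = 0}

end

/-!
Normalize by `e^{-b(p)}`: the terms `u_i = e^{α_i + m_i·p - b(p)}` satisfy
`|u_i| = e^{-(b(p) - Re(α_i + m_i·p))}`, and at least one of them has modulus `1`. For a rapidly
growing sequence of scales `λ₀ < λ₁ < ⋯`, pigeonhole gives a band `[λ_j, λ_{j+1})` containing
none of the gaps `b(p) - Re(α_i + m_i·p)`. It splits the exponents into a cluster `H` (gaps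
below `λ_j`) and a tail whose terms are at most `e^{-λ₀}`. Away from `U_{c₁}(Γ^{(n-1)})` the
cluster spans at most `n` real dimensions.

The cluster is totally real. Move `p` along a real direction that keeps the maximal exponents
tied and raises a near-maximal exponent outside their affine span, until that exponent becomes
maximal too. Each move is small compared with the gap, and after at most `l` moves the
near-maximal exponents lie in the affine span of the maximal ones, where basicness applies and
identifies `H` with a totally real simplex. Total reality makes the exponents of `H`
`ℂ`-affinely independent, so `(Σ_H u_i, Σ_H u_i m_i)` controls every `u_i` with `i ∈ H`, in
particular one of modulus `1`, while the tail is negligible.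
-/

open Filter Topology

theorem LinearIndependent.complex_of_real_I_smul {κ E : Type*} [AddCommGroup E] [Module ℂ E]
    [Module ℝ E] [IsScalarTower ℝ ℂ E] {v : κ → E}
    (hv : LinearIndependent ℝ fun q : κ × Bool => if q.2 then Complex.I • v q.1 else v q.1) :
    LinearIndependent ℂ v := by
  classical
  rw [linearIndependent_iff'] at hv ⊢
  intro s g hg i hi
  have hsplit := hv (s ×ˢ Finset.univ) (fun q => if q.2 then (g q.1).im else (g q.1).re) (by
    rw [Finset.sum_product, ← hg]
    refine Finset.sum_congr rfl fun j _ => ?_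
    rw [Fintype.sum_bool]
    simp only [if_true, Bool.false_eq_true, if_false]
    conv_rhs => rw [← Complex.re_add_im (g j)]
    rw [add_smul, mul_smul, ← algebraMap_smul ℂ (g j).re, ← algebraMap_smul ℂ (g j).im, add_comm]
    rfl)
  apply Complex.ext
  · simpa using hsplit (i, false) (by simp [hi])
  · simpa using hsplit (i, true) (by simp [hi])

theorem AffineIndependent.eventually_norm_le {𝕜 E ι : Type*} [NontriviallyNormedField 𝕜]
    [CompleteSpace 𝕜] [NormedAddCommGroup E] [NormedSpace 𝕜 E] [Fintype ι] {p : ι → E}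
    (hp : AffineIndependent 𝕜 p) :
    ∀ᶠ K in atTop, ∀ (w : ι → 𝕜) (i : ι), ‖w i‖ ≤ K * (‖∑ j, w j‖ + ‖∑ j, w j • p j‖) := by
  let T : (ι → 𝕜) →ₗ[𝕜] 𝕜 × E :=
    { toFun := fun w => (∑ j, w j, ∑ j, w j • p j)
      map_add' := fun w w' => by simp [add_smul, Finset.sum_add_distrib]
      map_smul' := fun c w => by simp [Finset.mul_sum, Finset.smul_sum, smul_smul] }
  have hT : LinearMap.ker T = ⊥ := by
    refine LinearMap.ker_eq_bot'.2 fun w hw => funext fun i => ?_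
    simp only [T, LinearMap.coe_mk, AddHom.coe_mk, Prod.mk_eq_zero] at hw
    exact hp.eq_zero_of_sum_eq_zero hw.1 hw.2 i (Finset.mem_univ i)
  obtain ⟨K, -, hK⟩ := T.exists_antilipschitzWith hT
  filter_upwards [eventually_ge_atTop (K : ℝ)] with K' hK' w i
  calc ‖w i‖ ≤ ‖w‖ := norm_le_pi_norm w i
    _ ≤ K * ‖T w‖ := ZeroHomClass.bound_of_antilipschitz T hK w
    _ ≤ K' * (‖∑ j, w j‖ + ‖∑ j, w j • p j‖) := by
      gcongr
      · exact K.coe_nonneg.trans hK'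
      · exact max_le_add_of_nonneg (norm_nonneg _) (norm_nonneg _)

theorem eventually_forall_affineIndependent_norm_le {𝕜 E ι : Type*} [NontriviallyNormedField 𝕜]
    [CompleteSpace 𝕜] [NormedAddCommGroup E] [NormedSpace 𝕜 E] [Fintype ι] (p : ι → E) :
    ∀ᶠ K in atTop, ∀ s : Finset ι, AffineIndependent 𝕜 (fun i : s => p i) →
      ∀ (w : ι → 𝕜), ∀ i ∈ s, ‖w i‖ ≤ K * (‖∑ j ∈ s, w j‖ + ‖∑ j ∈ s, w j • p j‖) := by
  refine eventually_all.2 fun s => ?_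
  by_cases hs : AffineIndependent 𝕜 fun i : s => p i
  · filter_upwards [hs.eventually_norm_le] with K hK _ w i hi
    have := hK (fun j => w j) ⟨i, hi⟩
    rwa [Finset.sum_coe_sort s w, Finset.sum_coe_sort s fun j => w j • p j] at this
  · exact Eventually.of_forall fun _ hs' => absurd hs' hs

theorem norm_sum_le_card_mul {ι E : Type*} [Fintype ι] [SeminormedAddCommGroup E]
    {t : Finset ι} {f : ι → E} {ε : ℝ} (hε : 0 ≤ ε) (h : ∀ i ∈ t, ‖f i‖ ≤ ε) :
    ‖∑ i ∈ t, f i‖ ≤ Fintype.card ι * ε :=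
  calc ‖∑ i ∈ t, f i‖ ≤ ∑ _i ∈ t, ε := norm_sum_le_of_le t h
    _ ≤ Fintype.card ι * ε := by
      rw [Finset.sum_const, nsmul_eq_mul]
      gcongr
      exact t.card_le_univ

theorem inv_two_mul_le_norm_sum_add_norm_sum {ι E : Type*} [Fintype ι] [NormedAddCommGroup E]
    [NormedSpace ℂ E] {p : ι → E} {s : Finset ι} {K M ε : ℝ}
    (hK : ∀ (w : ι → ℂ), ∀ i ∈ s, ‖w i‖ ≤ K * (‖∑ j ∈ s, w j‖ + ‖∑ j ∈ s, w j • p j‖))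
    (hK₀ : 0 < K) (hM : ∀ i, ‖p i‖ ≤ M) (hε : 0 ≤ ε)
    (hsmall : Fintype.card ι * ε * (1 + M) * K ≤ 1 / 2) {u : ι → ℂ} {i₀ : ι} (hi₀ : i₀ ∈ s)
    (hu₀ : ‖u i₀‖ = 1) (hu : ∀ i ∉ s, ‖u i‖ ≤ ε) :
    (2 * K)⁻¹ ≤ ‖∑ i, u i‖ + ‖∑ i, u i • p i‖ := by
  classical
  have hM₀ : 0 ≤ M := (norm_nonneg _).trans (hM i₀)
  have hcompl : ∀ i ∈ sᶜ, ‖u i‖ ≤ ε := fun i hi => hu i (Finset.mem_compl.1 hi)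
  have hS : ‖∑ i ∈ s, u i‖ ≤ ‖∑ i, u i‖ + Fintype.card ι * ε :=
    calc ‖∑ i ∈ s, u i‖ = ‖∑ i, u i - ∑ i ∈ sᶜ, u i‖ := by
          rw [← Finset.sum_add_sum_compl s u, add_sub_cancel_right]
      _ ≤ ‖∑ i, u i‖ + Fintype.card ι * ε :=
          (norm_sub_le _ _).trans (add_le_add le_rfl (norm_sum_le_card_mul hε hcompl))
  have hG : ‖∑ i ∈ s, u i • p i‖ ≤ ‖∑ i, u i • p i‖ + Fintype.card ι * (ε * M) :=
    calc ‖∑ i ∈ s, u i • p i‖ = ‖∑ i, u i • p i - ∑ i ∈ sᶜ, u i • p i‖ := by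
          rw [← Finset.sum_add_sum_compl s, add_sub_cancel_right]
      _ ≤ ‖∑ i, u i • p i‖ + Fintype.card ι * (ε * M) :=
          (norm_sub_le _ _).trans (add_le_add le_rfl (norm_sum_le_card_mul (by positivity)
            fun i hi => (norm_smul_le _ _).trans
              (mul_le_mul (hcompl i hi) (hM i) (norm_nonneg _) hε)))
  have h1 := hK u i₀ hi₀
  rw [hu₀] at h1
  rw [inv_le_iff_one_le_mul₀ (by positivity)]
  nlinarith

theorem exists_forall_notMem_Ico_of_monotone {ι : Type*} [Fintype ι] (x : ι → ℝ)
    {a : ℕ → ℝ} (ha : Monotone a) :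
    ∃ j ≤ Fintype.card ι, ∀ i, x i ∉ Set.Ico (a j) (a (j + 1)) := by
  by_contra! hall
  choose F hF using fun j : Fin (Fintype.card ι + 1) => hall j (Nat.lt_succ_iff.1 j.2)
  obtain ⟨j, j', hne, heq⟩ := Fintype.exists_ne_map_eq_of_card_lt F (by simp)
  have disjoint : ∀ j j' : Fin (Fintype.card ι + 1), F j = F j' → (j : ℕ) < j' → False :=
    fun j j' heq hlt => by
      have h1 := (hF j).2
      rw [heq] at h1
      linarith [(hF j').1, ha (Nat.succ_le_of_lt hlt)]
  rcases lt_or_gt_of_ne (Fin.val_ne_of_ne hne) with h | h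
  · exact disjoint j j' heq h
  · exact disjoint j' j heq.symm h

open Finset in
theorem exists_pos_argmax_ssubset {ι : Type*} [Fintype ι] [Nonempty ι] (r s : ι → ℝ) {c : ℝ}
    (hc : ∀ i, r i = univ.sup' univ_nonempty r → s i = c) {j : ι} (hj : c < s j) :
    ∃ t, 0 < t ∧ t * (s j - c) ≤ univ.sup' univ_nonempty r - r j ∧
      {i | r i = univ.sup' univ_nonempty r} ⊂
        {i | r i + t * s i = univ.sup' univ_nonempty fun i => r i + t * s i} := by
  classical
  set B := univ.sup' univ_nonempty r
  set P := univ.filter fun i => c < s i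
  have hP : P.Nonempty := ⟨j, by simp [P, hj]⟩
  have hslope : ∀ i ∈ P, 0 < s i - c := fun i hi => sub_pos.2 (mem_filter.1 hi).2
  have hgap : ∀ i ∈ P, 0 < B - r i := fun i hi =>
    sub_pos.2 (lt_of_le_of_ne (le_sup' r (mem_univ i)) fun h => (hslope i hi).ne' (by
      rw [hc i h, sub_self]))
  obtain ⟨i₁, hi₁P, hi₁⟩ := P.exists_mem_eq_inf' hP fun i => (B - r i) / (s i - c)
  -- the first time at which a new index catches up with the maximal ones
  set t := P.inf' hP fun i => (B - r i) / (s i - c)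
  have hτ : ∀ i ∈ P, t * (s i - c) ≤ B - r i := fun i hi =>
    (le_div_iff₀ (hslope i hi)).1 (P.inf'_le _ hi)
  have ht : 0 < t := (P.lt_inf'_iff hP).2 fun i hi => div_pos (hgap i hi) (hslope i hi)
  have hle : ∀ i, r i + t * s i ≤ B + t * c := fun i => by
    by_cases hi : c < s i
    · linarith [hτ i (by simp [P, hi])]
    · linarith [le_sup' r (mem_univ i), mul_le_mul_of_nonneg_left (not_lt.1 hi) ht.le]
  obtain ⟨i₀, -, hi₀⟩ := exists_mem_eq_sup' univ_nonempty r
  have hsup : univ.sup' univ_nonempty (fun i => r i + t * s i) = B + t * c :=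
    le_antisymm (sup'_le _ _ fun i _ => hle i)
      (le_sup'_of_le _ (mem_univ i₀) (by rw [← hi₀, hc i₀ hi₀.symm]))
  refine ⟨t, ht, hτ j (by simp [P, hj]), (Set.ssubset_iff_of_subset fun i hi => ?_).2
    ⟨i₁, ?_, fun h => (hgap i₁ hi₁P).ne' (sub_eq_zero.2 h.symm)⟩⟩
  · simp only [Set.mem_ofPred_eq] at hi ⊢
    rw [hsup, hc i hi, hi]
  · have : t * (s i₁ - c) = B - r i₁ := by
      rw [hi₁, div_mul_cancel₀ _ (hslope i₁ hi₁P).ne']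
    simp only [Set.mem_ofPred_eq, hsup]
    linarith

theorem re_edot_add_smul {n : ℕ} (v z w : ESp n) (t : ℝ) :
    (edot v (z + t • w)).re = (edot v z).re + t * (edot v w).re := by
  have : edot v (z + t • w) = edot v z + t * edot v w := by
    simp [edot, mul_add, Finset.sum_add_distrib, Finset.mul_sum, Complex.real_smul, mul_left_comm]
  rw [this, Complex.add_re, Complex.re_ofReal_mul]

theorem exists_re_edot_eq {n : ℕ} (φ : Module.Dual ℝ (ESp n)) :
    ∃ w : ESp n, ∀ v, (edot v w).re = φ v := by
  classical
  -- `φ` is the real part of a `ℂ`-linear functional `ψ`, and `ψ v = Σ v_k ψ(e_k)`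
  let ψ : Module.Dual ℂ (ESp n) := φ.extendRCLike (𝕜 := ℂ)
  refine ⟨WithLp.toLp 2 fun k => ψ (EuclideanSpace.single k 1), fun v => ?_⟩
  have hψ : ψ v = edot v (WithLp.toLp 2 fun k => ψ (EuclideanSpace.single k 1)) := by
    conv_lhs => rw [← (EuclideanSpace.basisFun (Fin n) ℂ).sum_repr v]
    simp [edot]
  rw [← hψ]
  exact Module.Dual.re_extendRCLike_apply (𝕜 := ℂ) φ v

theorem exists_re_edot_eq_add_one_of_notMem_affineSpan {n : ℕ} {S : Set (ESp n)} {x : ESp n}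
    (hx : x ∉ affineSpan ℝ S) :
    ∃ (w : ESp n) (c : ℝ), (∀ y ∈ S, (edot y w).re = c) ∧ (edot x w).re = c + 1 := by
  rcases S.eq_empty_or_nonempty with rfl | ⟨y₀, hy₀⟩
  · exact ⟨0, -1, by simp, by simp [edot]⟩
  have hy₀' : y₀ ∈ affineSpan ℝ S := subset_affineSpan ℝ S hy₀
  have hdir : x - y₀ ∉ (affineSpan ℝ S).direction := by
    rwa [← vsub_eq_sub, AffineSubspace.vsub_right_mem_direction_iff_mem hy₀']
  obtain ⟨g, hgx, hg⟩ := Submodule.exists_dual_map_eq_bot_of_notMem hdir inferInstance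
  obtain ⟨w, hw⟩ := exists_re_edot_eq ((g (x - y₀))⁻¹ • g)
  have hg₀ : ∀ y ∈ S, g (y - y₀) = 0 := fun y hy => by
    have hmem := Submodule.mem_map_of_mem (f := g)
      (AffineSubspace.vsub_mem_direction (subset_affineSpan ℝ S hy) hy₀')
    rwa [hg, Submodule.mem_bot] at hmem
  refine ⟨w, (edot y₀ w).re, fun y hy => ?_, ?_⟩
  · rw [hw, hw, ← sub_eq_zero, ← map_sub, LinearMap.smul_apply, hg₀ y hy, smul_zero]
  · rw [hw, hw, ← sub_eq_iff_eq_add', ← map_sub, LinearMap.smul_apply, smul_eq_mul,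
      inv_mul_cancel₀ hgx]

section ExpSum

variable {n l : ℕ} {m : Fin (l+1) → ESp n} {α : Fin (l+1) → ℂ}

theorem TotallyRealSet.affineIndependent {s : Set (Fin (l+1))} (h : TotallyRealSet m s) :
    AffineIndependent ℂ fun i : s => m i := by
  rcases s.eq_empty_or_nonempty with rfl | ⟨i₀, hi₀⟩
  · exact affineIndependent_of_subsingleton ℂ _
  have hC := LinearIndependent.complex_of_real_I_smul
    (v := fun i : {i // i ∈ s ∧ i ≠ i₀} => m i - m i₀) (h i₀ hi₀)
  let e : {x : s // x ≠ ⟨i₀, hi₀⟩} → {i // i ∈ s ∧ i ≠ i₀} :=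
    fun i => ⟨i.1.1, i.1.2, fun h => i.2 (Subtype.ext h)⟩
  have he : Function.Injective e := fun i j hij => by
    simpa [e, Subtype.ext_iff] using hij
  rw [affineIndependent_iff_linearIndependent_vsub ℂ _ ⟨i₀, hi₀⟩]
  exact hC.comp e he

theorem le_bfun (m : Fin (l+1) → ESp n) (α : Fin (l+1) → ℂ) (z : ESp n) (i : Fin (l+1)) :
    (α i + edot (m i) z).re ≤ bfun m α z :=
  Finset.le_sup' (fun j => (α j + edot (m j) z).re) (Finset.mem_univ i)

theorem exists_mem_Iset (m : Fin (l+1) → ESp n) (α : Fin (l+1) → ℂ) (z : ESp n) :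
    ∃ i, i ∈ Iset m α z := by
  obtain ⟨i, -, hi⟩ := Finset.exists_mem_eq_sup' Finset.univ_nonempty
    fun j => (α j + edot (m j) z).re
  exact ⟨i, hi.symm⟩

theorem Iset_subset_IsetC {z : ESp n} {c : ℝ} (hc : 0 < c) : Iset m α z ⊆ IsetC m α z c := by
  intro i hi
  simp only [Iset, IsetC, Set.mem_ofPred_eq] at hi ⊢
  linarith

theorem IsetC_mono {z : ESp n} {c c' : ℝ} (h : c ≤ c') : IsetC m α z c ⊆ IsetC m α z c' := by
  intro i hi
  simp only [IsetC, Set.mem_ofPred_eq] at hi ⊢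
  linarith

theorem IsetC_subset_IsetC_of_abs_sub_le {z z' : ESp n} {δ : ℝ}
    (h : ∀ i, |(α i + edot (m i) z').re - (α i + edot (m i) z).re| ≤ δ) (c : ℝ) :
    IsetC m α z c ⊆ IsetC m α z' (c + 2 * δ) := by
  intro i hi
  simp only [IsetC, Set.mem_ofPred_eq] at hi ⊢
  have hb : bfun m α z' ≤ bfun m α z + δ := Finset.sup'_le _ _ fun k _ => by
    linarith [le_bfun m α z k, (abs_le.1 (h k)).2]
  linarith [(abs_le.1 (h i)).1]

theorem finrank_direction_affineSpan_image_mono {s t : Set (Fin (l+1))} (h : s ⊆ t) :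
    Module.finrank ℝ (affineSpan ℝ (m '' s)).direction ≤
      Module.finrank ℝ (affineSpan ℝ (m '' t)).direction :=
  Submodule.finrank_mono (AffineSubspace.direction_le (affineSpan_mono ℝ (Set.image_mono h)))

/-- `f c₁` is an admissible `c₂` for `c₁` in the definition of `IsBasic`. -/
def IsBasicScale (m : Fin (l+1) → ESp n) (α : Fin (l+1) → ℂ) (f : ℝ → ℝ) : Prop :=
  ∀ a > (0:ℝ), ∀ k : ℕ, n ≤ k → k ≤ 2*n → ∀ z ∈ skel m α k \ Uskel m α (f a) (k-1),
    IsetC m α z a = Iset m α z ∧ TotallyRealSet m (Iset m α z)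

theorem IsBasic.exists_isBasicScale (h : IsBasic m α) :
    ∃ f : ℝ → ℝ, (∀ a, 0 < f a) ∧ IsBasicScale m α f := by
  choose g hg₀ hg using h
  refine ⟨fun a => if ha : 0 < a then g a ha else 1, fun a => ?_, fun a ha k hk hk' z hz => ?_⟩
  · dsimp only
    split_ifs with ha
    exacts [hg₀ a ha, one_pos]
  · simp only [dif_pos ha] at hz
    exact (hg a ha k hk hk' z hz).imp_right And.left

theorem IsBasicScale.isetC_eq_and_totallyRealSet {f : ℝ → ℝ} (hf : IsBasicScale m α f)
    (hn : 0 < n) {z : ESp n} {a : ℝ} (ha : 0 < a) (hfa : 0 < f a)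
    (hdim : Module.finrank ℝ (affineSpan ℝ (m '' Iset m α z)).direction ≤ n)
    (hspan : m '' IsetC m α z (f a) ⊆ affineSpan ℝ (m '' Iset m α z)) :
    IsetC m α z a = Iset m α z ∧ TotallyRealSet m (Iset m α z) := by
  have heq : affineSpan ℝ (m '' IsetC m α z (f a)) = affineSpan ℝ (m '' Iset m α z) :=
    le_antisymm (affineSpan_le.2 hspan)
      (affineSpan_mono ℝ (Set.image_mono (Iset_subset_IsetC hfa)))
  refine hf a ha (2 * n - Module.finrank ℝ (affineSpan ℝ (m '' Iset m α z)).direction)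
    (by omega) (by omega) z ⟨?_, ?_⟩
  · simp only [skel, Set.mem_ofPred_eq]
    omega
  · simp only [Uskel, Set.mem_ofPred_eq]
    rw [heq]
    omega

/-- Exponents off the affine span of `m '' T` can be raised, relative to the common value on
`T`, by moving `z` in a direction `w` along which every exponent moves at rate at most `C`. -/
def HasBoundedLifts (m : Fin (l+1) → ESp n) (C : ℝ) : Prop :=
  ∀ (T : Set (Fin (l+1))) (j : Fin (l+1)), m j ∉ affineSpan ℝ (m '' T) →
    ∃ (w : ESp n) (c : ℝ), (∀ i ∈ T, (edot (m i) w).re = c) ∧ (edot (m j) w).re = c + 1 ∧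
      ∀ i, |(edot (m i) w).re| ≤ C

theorem eventually_hasBoundedLifts (m : Fin (l+1) → ESp n) :
    ∀ᶠ C in atTop, HasBoundedLifts m C := by
  refine eventually_all.2 fun T => eventually_all.2 fun j => ?_
  by_cases hj : m j ∈ affineSpan ℝ (m '' T)
  · exact Eventually.of_forall fun _ hj' => absurd hj hj'
  obtain ⟨w, c, hT, hjw⟩ := exists_re_edot_eq_add_one_of_notMem_affineSpan hj
  filter_upwards [eventually_all.2 fun i => eventually_ge_atTop |(edot (m i) w).re|]
    with C hC _
  exact ⟨w, c, fun i hi => hT _ ⟨i, hi, rfl⟩, hjw, hC⟩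

theorem HasBoundedLifts.exists_Iset_ssubset {C : ℝ} (hC : HasBoundedLifts m C) {z : ESp n}
    {c : ℝ} (hspan : ¬ m '' IsetC m α z c ⊆ affineSpan ℝ (m '' Iset m α z)) :
    ∃ z', Iset m α z ⊂ Iset m α z' ∧
      ∀ i, |(α i + edot (m i) z').re - (α i + edot (m i) z).re| ≤ c * C := by
  obtain ⟨_, ⟨j, hj, rfl⟩, hjspan⟩ := Set.not_subset.1 hspan
  obtain ⟨w, c₀, hT, hjw, hbound⟩ := hC _ j hjspan
  obtain ⟨t, ht, htj, hss⟩ := exists_pos_argmax_ssubset (fun i => (α i + edot (m i) z).re)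
    (fun i => (edot (m i) w).re) (c := c₀) hT (j := j) (by linarith)
  have hshift : ∀ i, (α i + edot (m i) (z + t • w)).re =
      (α i + edot (m i) z).re + t * (edot (m i) w).re := fun i => by
    rw [Complex.add_re, Complex.add_re, re_edot_add_smul, add_assoc]
  refine ⟨z + t • w, by simpa only [Iset, bfun, hshift] using hss, fun i => ?_⟩
  have htc : t < c := by
    have : bfun m α z - c < (α j + edot (m j) z).re := hj
    rw [hjw, add_sub_cancel_left, mul_one] at htj
    change t ≤ bfun m α z - _ at htj
    linarith
  rw [hshift, add_sub_cancel_left, abs_mul, abs_of_pos ht]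
  exact mul_le_mul htc.le (hbound i) (abs_nonneg _) (ht.trans htc).le

/-- A cluster of width `a` grows to width at most `clusterStep C f a` in one move of
`HasBoundedLifts.exists_Iset_ssubset` with `c = f a`, since every gap `b - Re(α_i + m_i·z)`
changes by at most `2 f(a) C`. -/
def clusterStep (C : ℝ) (f : ℝ → ℝ) (x : ℝ) : ℝ := x + 2 * (f x * C)

/-- The separation needed for a cluster of width `x` to stay isolated during `N` moves. -/
def gapScale (C : ℝ) (f : ℝ → ℝ) (N : ℕ) (x : ℝ) : ℝ := 2 * (clusterStep C f)^[N] x - x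

theorem id_le_clusterStep {C : ℝ} {f : ℝ → ℝ} (hC : 0 ≤ C) (hf : ∀ a, 0 < f a) :
    id ≤ clusterStep C f := fun x => by
  have := mul_nonneg (hf x).le hC
  simp only [id, clusterStep]
  linarith

theorem id_le_gapScale {C : ℝ} {f : ℝ → ℝ} (hC : 0 ≤ C) (hf : ∀ a, 0 < f a) (N : ℕ) :
    id ≤ gapScale C f N := fun x => by
  have := Function.id_le_iterate_of_id_le (id_le_clusterStep hC hf) N x
  simp only [id, gapScale] at this ⊢
  linarith

theorem totallyRealSet_of_isolated {f : ℝ → ℝ} {C : ℝ} (hn : 0 < n) (hf : IsBasicScale m α f)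
    (hf₀ : ∀ a, 0 < f a) (hC : HasBoundedLifts m C) (hC₀ : 0 ≤ C) {H : Set (Fin (l+1))}
    (hH : Module.finrank ℝ (affineSpan ℝ (m '' H)).direction ≤ n) (N : ℕ) :
    ∀ (z : ESp n) (a g : ℝ), 0 < a → H ⊆ IsetC m α z a → IsetC m α z g ⊆ H →
      gapScale C f N a ≤ g → l + 1 ≤ (Iset m α z).ncard + N → TotallyRealSet m H := by
  induction N using Nat.strong_induction_on with
  | _ N ih =>
    intro z a g ha hHa hgH hg hcard
    have hag : a ≤ g := (id_le_gapScale hC₀ hf₀ N a).trans hg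
    have hIH : Iset m α z ⊆ H := (Iset_subset_IsetC (ha.trans_le hag)).trans hgH
    by_cases hspan : m '' IsetC m α z (f a) ⊆ affineSpan ℝ (m '' Iset m α z)
    · obtain ⟨hIC, hTR⟩ := hf.isetC_eq_and_totallyRealSet hn ha (hf₀ a)
        ((finrank_direction_affineSpan_image_mono hIH).trans hH) hspan
      rwa [(hHa.trans hIC.subset).antisymm hIH]
    obtain ⟨z', hss, hdrift⟩ := hC.exists_Iset_ssubset hspan
    have hlt := Set.ncard_lt_ncard hss
    have hle := Set.ncard_le_card (Iset m α z')
    rw [Nat.card_eq_fintype_card, Fintype.card_fin] at hle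
    obtain ⟨N, rfl⟩ : ∃ N', N = N' + 1 := Nat.exists_eq_succ_of_ne_zero (by omega)
    refine ih N (lt_add_one N) z' (clusterStep C f a) (g - 2 * (f a * C))
      (ha.trans_le (id_le_clusterStep hC₀ hf₀ a))
      (hHa.trans (IsetC_subset_IsetC_of_abs_sub_le hdrift a))
      ((IsetC_subset_IsetC_of_abs_sub_le (fun i => by rw [abs_sub_comm]; exact hdrift i) _).trans
        (by rwa [sub_add_cancel]))
      ?_ (by omega)
    simp only [gapScale, Function.iterate_succ_apply, clusterStep] at hg ⊢
    linarith

theorem exists_totallyRealSet_cluster {f : ℝ → ℝ} {C lam₀ : ℝ} (hf : IsBasicScale m α f)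
    (hf₀ : ∀ a, 0 < f a) (hC : HasBoundedLifts m C) (hC₀ : 0 ≤ C) (hlam₀ : 0 < lam₀) {p : ESp n}
    (hp : p ∉ Uskel m α ((gapScale C f (l+1))^[l+1] lam₀) (n-1)) :
    ∃ H : Set (Fin (l+1)), TotallyRealSet m H ∧ Iset m α p ⊆ H ∧
      ∀ i ∉ H, (α i + edot (m i) p).re ≤ bfun m α p - lam₀ := by
  have hn : 0 < n := Nat.pos_of_ne_zero fun h => hp (by simp [Uskel, h])
  set lam : ℕ → ℝ := fun j => (gapScale C f (l+1))^[j] lam₀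
  have hmono : Monotone lam := fun i j hij =>
    Function.monotone_iterate_of_id_le (id_le_gapScale hC₀ hf₀ _) hij lam₀
  have hge : ∀ k, lam₀ ≤ lam k := fun k => hmono (Nat.zero_le k)
  obtain ⟨j, hj, hgap⟩ :=
    exists_forall_notMem_Ico_of_monotone (fun i => bfun m α p - (α i + edot (m i) p).re) hmono
  rw [Fintype.card_fin] at hj
  have hlamj : 0 < lam j := hlam₀.trans_le (hge j)
  have hout : ∀ i ∉ IsetC m α p (lam j), lam (j+1) ≤ bfun m α p - (α i + edot (m i) p).re :=
    fun i hi => by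
      simp only [IsetC, Set.mem_ofPred_eq, not_lt] at hi
      by_contra h
      exact hgap i ⟨by linarith, by linarith⟩
  have hdim : Module.finrank ℝ (affineSpan ℝ (m '' IsetC m α p (lam j))).direction ≤ n := by
    have := finrank_direction_affineSpan_image_mono (m := m)
      (IsetC_mono (m := m) (α := α) (z := p) (hmono hj))
    have hp' : ¬ 2 * n - (n - 1) ≤
        Module.finrank ℝ (affineSpan ℝ (m '' IsetC m α p (lam (l+1)))).direction := hp
    omega
  refine ⟨IsetC m α p (lam j), totallyRealSet_of_isolated hn hf hf₀ hC hC₀ hdim (l+1) p (lam j)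
    (lam (j+1)) hlamj subset_rfl (fun i hi => ?_) (Function.iterate_succ_apply' _ j lam₀).ge
    (by omega), Iset_subset_IsetC hlamj, fun i hi => by linarith [hout i hi, hge (j+1)]⟩
  by_contra h
  have := hout i h
  simp only [IsetC, Set.mem_ofPred_eq] at hi
  linarith

theorem gradExpSum_eq_sum (m : Fin (l+1) → ESp n) (α : Fin (l+1) → ℂ) (z : ESp n) :
    gradExpSum m α z = ∑ j, Complex.exp (α j + edot (m j) z) • m j := by
  ext k
  simp [gradExpSum]

theorem norm_exp_sub_bfun (m : Fin (l+1) → ESp n) (α : Fin (l+1) → ℂ) (z : ESp n)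
    (i : Fin (l+1)) :
    ‖Complex.exp (α i + edot (m i) z - bfun m α z)‖ =
      Real.exp ((α i + edot (m i) z).re - bfun m α z) := by
  rw [Complex.norm_exp, Complex.sub_re, Complex.ofReal_re]

theorem norm_sum_exp_sub_bfun_add (m : Fin (l+1) → ESp n) (α : Fin (l+1) → ℂ) (z : ESp n) :
    ‖∑ i, Complex.exp (α i + edot (m i) z - bfun m α z)‖ +
        ‖∑ i, Complex.exp (α i + edot (m i) z - bfun m α z) • m i‖ =
      Real.exp (-bfun m α z) * (‖expSum m α z‖ + ‖gradExpSum m α z‖) := by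
  have hexp : ∀ i, Complex.exp (α i + edot (m i) z - bfun m α z) =
      (Real.exp (-bfun m α z) : ℂ) * Complex.exp (α i + edot (m i) z) := fun i => by
    rw [Complex.ofReal_exp, ← Complex.exp_add, Complex.ofReal_neg, neg_add_eq_sub]
  simp only [hexp, mul_smul, ← Finset.mul_sum, ← Finset.smul_sum, ← gradExpSum_eq_sum, expSum,
    norm_mul, norm_smul, Complex.norm_real, Real.norm_of_nonneg (Real.exp_pos _).le, mul_add]

end ExpSum

/-- For a basic exponential sum there are `c₁, c₂ > 0` with
`|μ(p)|_p + |dμ(p)|_p ≥ c₂` outside `U_{c₁}(Γ^{(n−1)})`. -/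
theorem stmt12 (n l : ℕ) (m : Fin (l+1) → ESp n) (α : Fin (l+1) → ℂ)
    (h : IsBasic m α) :
    ∃ c₁ > (0:ℝ), ∃ c₂ > (0:ℝ), ∀ p : ESp n, p ∉ Uskel m α c₁ (n-1) →
      c₂ ≤ Real.exp (-(bfun m α p)) *
        (‖expSum m α p‖ + ‖gradExpSum m α p‖) := by
  classical
  obtain ⟨f, hf₀, hf⟩ := h.exists_isBasicScale
  obtain ⟨C, hC, hC₀⟩ := ((eventually_hasBoundedLifts m).and (eventually_ge_atTop 0)).exists
  obtain ⟨K, hK, hK₀⟩ := ((eventually_forall_affineIndependent_norm_le (𝕜 := ℂ) m).and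
    (eventually_gt_atTop 0)).exists
  obtain ⟨M, hM⟩ := (eventually_all.2 fun i => eventually_ge_atTop ‖m i‖).exists
  obtain ⟨lam₀, hsmall, hlam₀⟩ : ∃ lam₀ : ℝ,
      (l + 1 : ℝ) * Real.exp (-lam₀) * (1 + M) * K ≤ 1 / 2 ∧ 0 < lam₀ := by
    have : Tendsto (fun x => (l + 1 : ℝ) * Real.exp (-x) * (1 + M) * K) atTop (𝓝 0) := by
      simpa using ((Real.tendsto_exp_neg_atTop_nhds_zero.const_mul (l + 1 : ℝ)).mul_const
        (1 + M)).mul_const K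
    exact ((this.eventually (ge_mem_nhds (by norm_num))).and (eventually_gt_atTop 0)).exists
  refine ⟨(gapScale C f (l+1))^[l+1] lam₀,
    hlam₀.trans_le (Function.id_le_iterate_of_id_le (id_le_gapScale hC₀ hf₀ _) _ _),
    (2 * K)⁻¹, by positivity, fun p hp => ?_⟩
  obtain ⟨H, hTR, hIH, hout⟩ := exists_totallyRealSet_cluster hf hf₀ hC hC₀ hlam₀ hp
  obtain ⟨i₀, hi₀⟩ := exists_mem_Iset m α p
  rw [← Set.coe_toFinset H] at hTR hIH hout
  rw [← norm_sum_exp_sub_bfun_add]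
  refine inv_two_mul_le_norm_sum_add_norm_sum (hK _ hTR.affineIndependent) hK₀ hM
    (Real.exp_pos _).le (by simpa using hsmall) (hIH hi₀) ?_ fun i hi => ?_
  · rw [norm_exp_sub_bfun, hi₀, sub_self, Real.exp_zero]
  · rw [norm_exp_sub_bfun, Real.exp_le_exp]
    linarith [hout i hi]
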